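/- For every integer n ≥ 1, the mean of the number of flaws over all ordered preference sets of length n equals 2^{2n−1}/C(2n,n) − 1, and the variance of the number of flaws equals n − (2^{2n−1}/C(2n,n))²; equivalently, with op_{n,k} the number of ordered preference sets of length n with exactly k flaws, one has 2·Σ_{k=0}^{n−1} op_{n,k} = C(2n,n), 2·Σ_{k=0}^{n−1} k·op_{n,k} = 2^{2n−1} − C(2n,n), and 2·Σ_{k=0}^{n−1} k(k−1)·op_{n,k} = (n+2)·C(2n,n) − 3·2^{2n−1}. -/

import Mathlib

/-- The first unoccupied parking space `j` with `p ≤ j ≤ n`, if any. -/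
def firstFree (n : ℕ) (occ : Finset ℕ) (p : ℕ) : Option ℕ :=
  (List.range' p (n + 1 - p)).find? (fun j => decide (j ∉ occ))

/-- Number of cars that fail to park, processing the preference list in order,
given the set of already occupied spaces. -/
def flawsFrom (n : ℕ) : List ℕ → Finset ℕ → ℕ
  | [], _ => 0
  | p :: rest, occ =>
    match firstFree n occ p with
    | none => flawsFrom n rest occ + 1
    | some j => flawsFrom n rest (insert j occ)

/-- The number of flaws (unparked cars) of a preference list of length `n`. -/
def flaws (n : ℕ) (a : List ℕ) : ℕ := flawsFrom n a ∅

/-- A preference set of length `n`: a list of length `n` with entries in `{1, …, n}`. -/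
def IsPrefSet (n : ℕ) (a : List ℕ) : Prop :=
  a.length = n ∧ ∀ x ∈ a, 1 ≤ x ∧ x ≤ n

/-- An ordered preference set of length `n`: a nondecreasing preference set. -/
def IsOrderedPrefSet (n : ℕ) (a : List ℕ) : Prop :=
  IsPrefSet n a ∧ a.Pairwise (· ≤ ·)

/-- `op_{n,≥k}`: number of ordered preference sets of length `n` with at least `k` flaws. -/
noncomputable def opGe (n k : ℕ) : ℕ :=
  {a : List ℕ | IsOrderedPrefSet n a ∧ k ≤ flaws n a}.ncard

/-- `op_{n,≤k}`: number of ordered preference sets of length `n` with at most `k` flaws. -/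
noncomputable def opLe (n k : ℕ) : ℕ :=
  {a : List ℕ | IsOrderedPrefSet n a ∧ flaws n a ≤ k}.ncard

/-- `op_{n,k}`: number of ordered preference sets of length `n` with exactly `k` flaws. -/
noncomputable def opEq (n k : ℕ) : ℕ :=
  {a : List ℕ | IsOrderedPrefSet n a ∧ flaws n a = k}.ncard

/-- `op_{n,≥k,≤l}`: at least `k` flaws, every entry at most `l`. -/
noncomputable def opGeLe (n k l : ℕ) : ℕ :=
  {a : List ℕ | IsOrderedPrefSet n a ∧ k ≤ flaws n a ∧ ∀ x ∈ a, x ≤ l}.ncard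

/-- `op_{n,≥k,≤l}^m`: at least `k` flaws, every entry at most `l`, leading term `m`. -/
noncomputable def opGeLeLead (n k l m : ℕ) : ℕ :=
  {a : List ℕ | IsOrderedPrefSet n a ∧ k ≤ flaws n a ∧ (∀ x ∈ a, x ≤ l) ∧
    a.head? = some m}.ncard

/-- `op_{n,k,≤l}^m`: exactly `k` flaws, every entry at most `l`, leading term `m`. -/
noncomputable def opEqLeLead (n k l m : ℕ) : ℕ :=
  {a : List ℕ | IsOrderedPrefSet n a ∧ flaws n a = k ∧ (∀ x ∈ a, x ≤ l) ∧
    a.head? = some m}.ncard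

/-- `op_{n,k}^m`: exactly `k` flaws, leading term `m`. -/
noncomputable def opLead (n k m : ℕ) : ℕ :=
  {a : List ℕ | IsOrderedPrefSet n a ∧ flaws n a = k ∧ a.head? = some m}.ncard

/-- `op_{n,k,=l}^m`: exactly `k` flaws, maximal entry exactly `l`, leading term `m`. -/
noncomputable def opMaxLead (n k l m : ℕ) : ℕ :=
  {a : List ℕ | IsOrderedPrefSet n a ∧ flaws n a = k ∧ (∀ x ∈ a, x ≤ l) ∧ l ∈ a ∧
    a.head? = some m}.ncard

/-- Binomial coefficient `C(a, b)` with an integer lower index, which is `0`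
when `b < 0` (the standard convention). -/
def chooseInt (a : ℕ) (b : ℤ) : ℕ := if 0 ≤ b then a.choose b.toNat else 0

/-! A nondecreasing preference list parks its cars from left to right, so the occupied spaces at or
beyond the current preference always form an interval ending at a frontier; a car fails exactly
when the frontier has passed `n`. Hence `a` has at most `k` flaws iff `a_i ≤ i + k` for all `i`
(counting from `1`). Building such sequences by their last entry and counting with Pascal's rule
gives `op_{n,≤k} = C(2n-1, n) - C(2n-1, n+k+1)`, so `op_{n,k} = C(2n-1, n+k) - C(2n-1, n+k+1)`.
Summation by parts turns the first three moments into sums over the upper half of row `2n-1` of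
Pascal's triangle, evaluated by symmetry and by the telescoping identity
`(2k+1) C(2m+1, m+1+k) = (2m+1) (C(2m, m+k) - C(2m, m+k+1))`. -/

open Finset

/-- Flaws of a nondecreasing preference list when, from the current preference on, exactly the
spaces below the frontier `f` are occupied. -/
def frontierFlaws (n : ℕ) : List ℕ → ℕ → ℕ
  | [], _ => 0
  | p :: r, f =>
    if max p f ≤ n then frontierFlaws n r (max p f + 1) else frontierFlaws n r f + 1

theorem find?_range'_not_mem {occ : Finset ℕ} {f : ℕ} (cnt : ℕ) {p : ℕ}
    (hocc : ∀ i, p ≤ i → (i ∈ occ ↔ i < f)) :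
    (List.range' p cnt).find? (fun j => decide (j ∉ occ)) =
      if max p f < p + cnt then some (max p f) else none := by
  induction cnt generalizing p with
  | zero => simp
  | succ c ih =>
    rw [List.range'_succ, List.find?_cons]
    by_cases hp : p < f
    · have hpocc : p ∈ occ := (hocc p le_rfl).2 hp
      simp only [hpocc, not_true_eq_false, decide_false]
      rw [ih fun i hi => hocc i (by omega)]
      congr 1 <;> grind
    · have hpocc : p ∉ occ := fun h => hp ((hocc p le_rfl).1 h)
      simp only [hpocc, not_false_eq_true, decide_true]
      rw [if_pos (by omega)]
      congr 1
      omega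

theorem firstFree_eq {n p f : ℕ} {occ : Finset ℕ} (hp : p ≤ n)
    (hocc : ∀ i, p ≤ i → (i ∈ occ ↔ i < f)) :
    firstFree n occ p = if max p f ≤ n then some (max p f) else none := by
  rw [firstFree, find?_range'_not_mem _ hocc]
  congr 1
  simp only [eq_iff_iff]
  omega

theorem flawsFrom_eq_frontierFlaws {n : ℕ} {a : List ℕ} (hsorted : a.Pairwise (· ≤ ·))
    (hle : ∀ p ∈ a, p ≤ n) {occ : Finset ℕ} {f : ℕ}
    (hocc : ∀ j ∈ a, ∀ i, j ≤ i → (i ∈ occ ↔ i < f)) :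
    flawsFrom n a occ = frontierFlaws n a f := by
  induction a generalizing occ f with
  | nil => rfl
  | cons p r ih =>
    obtain ⟨hpr, hr⟩ := List.pairwise_cons.1 hsorted
    have hp := hocc p List.mem_cons_self
    have hle' : ∀ q ∈ r, q ≤ n := fun q hq => hle q (List.mem_cons_of_mem p hq)
    rw [flawsFrom, frontierFlaws, firstFree_eq (hle p List.mem_cons_self) hp]
    split_ifs with hm
    · refine ih hr hle' fun q hq i hqi => ?_
      have hpi : p ≤ i := hqi.trans' (hpr q hq)
      rw [Finset.mem_insert, hp i hpi]
      omega
    · exact congrArg (· + 1) <| ih hr hle' fun q hq i hqi => hp i (hqi.trans' (hpr q hq))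

theorem flaws_eq_frontierFlaws {n : ℕ} {a : List ℕ} (hsorted : a.Pairwise (· ≤ ·))
    (hle : ∀ p ∈ a, p ≤ n) : flaws n a = frontierFlaws n a 0 :=
  flawsFrom_eq_frontierFlaws hsorted hle fun _ _ _ _ => by simp

/-- `BelowDiagonal s l`: the `i`-th entry of `l`, counted from `0`, is at most `s + i`. -/
def BelowDiagonal : ℕ → List ℕ → Prop
  | _, [] => True
  | s, p :: r => p ≤ s ∧ BelowDiagonal (s + 1) r

theorem belowDiagonal_of_forall_le {n : ℕ} {l : List ℕ} (hle : ∀ x ∈ l, x ≤ n) {s : ℕ}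
    (hs : n ≤ s) : BelowDiagonal s l := by
  induction l generalizing s with
  | nil => trivial
  | cons p r ih =>
    exact ⟨(hle p List.mem_cons_self).trans hs,
      ih (fun x hx => hle x (List.mem_cons_of_mem p hx)) (by omega)⟩

theorem belowDiagonal_append_singleton {s q : ℕ} {l : List ℕ} :
    BelowDiagonal s (l ++ [q]) ↔ BelowDiagonal s l ∧ q ≤ s + l.length := by
  induction l generalizing s with
  | nil => simp [BelowDiagonal]
  | cons p r ih =>
    simp only [List.cons_append, BelowDiagonal, ih, List.length_cons]
    constructor
    · rintro ⟨h₁, h₂, h₃⟩; exact ⟨⟨h₁, h₂⟩, by omega⟩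
    · rintro ⟨⟨h₁, h₂⟩, h₃⟩; exact ⟨h₁, h₂, by omega⟩

theorem frontierFlaws_eq_length {n f : ℕ} (hf : n < f) (l : List ℕ) :
    frontierFlaws n l f = l.length := by
  induction l with
  | nil => rfl
  | cons p r ih => rw [frontierFlaws, if_neg (by omega), ih, List.length_cons]

theorem frontierFlaws_le_iff {n : ℕ} {l : List ℕ} (hle : ∀ x ∈ l, x ≤ n) {f c s : ℕ}
    (hf : f ≤ n + 1) (hs : s + l.length = n + 1 + c) :
    frontierFlaws n l f ≤ c ↔ BelowDiagonal s l ∧ f ≤ s := by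
  induction l generalizing f s with
  | nil => simp only [List.length_nil] at hs; simp [frontierFlaws, BelowDiagonal]; omega
  | cons p r ih =>
    have hp := hle p List.mem_cons_self
    have hle' : ∀ x ∈ r, x ≤ n := fun x hx => hle x (List.mem_cons_of_mem p hx)
    simp only [List.length_cons] at hs
    rw [frontierFlaws, BelowDiagonal]
    split_ifs with hm
    · rw [ih hle' (f := max p f + 1) (s := s + 1) (by omega) (by omega)]
      constructor
      · rintro ⟨h, hfs⟩; exact ⟨⟨by omega, h⟩, by omega⟩
      · rintro ⟨⟨hps, h⟩, hfs⟩; exact ⟨h, by omega⟩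
    · rw [frontierFlaws_eq_length (by omega)]
      constructor
      · intro h
        exact ⟨⟨by omega, belowDiagonal_of_forall_le hle' (by omega)⟩, by omega⟩
      · rintro ⟨-, hfs⟩
        omega

theorem flaws_le_iff_belowDiagonal {n : ℕ} {a : List ℕ} (ha : IsOrderedPrefSet n a) (c : ℕ) :
    flaws n a ≤ c ↔ BelowDiagonal (c + 1) a := by
  obtain ⟨⟨hlen, hent⟩, hsorted⟩ := ha
  have hle : ∀ x ∈ a, x ≤ n := fun x hx => (hent x hx).2
  rw [flaws_eq_frontierFlaws hsorted hle,
    frontierFlaws_le_iff hle (s := c + 1) (Nat.zero_le _) (by omega)]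
  simp

def ballotLists (k : ℕ) : ℕ → ℕ → Finset (List ℕ)
  | 0, _ => {[]}
  | i + 1, v => (Icc 1 (min v (i + 1 + k))).biUnion fun p => (ballotLists k i p).image (· ++ [p])

theorem mem_ballotLists {k i v : ℕ} {a : List ℕ} :
    a ∈ ballotLists k i v ↔
      a.length = i ∧ (∀ x ∈ a, 1 ≤ x ∧ x ≤ v) ∧ a.Pairwise (· ≤ ·) ∧
        BelowDiagonal (k + 1) a := by
  induction i generalizing v a with
  | zero =>
    simp only [ballotLists, mem_singleton, List.length_eq_zero_iff]
    constructor
    · rintro rfl; simp [BelowDiagonal]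
    · exact fun h => h.1
  | succ i ih =>
    simp only [ballotLists, mem_biUnion, mem_Icc, mem_image, ih]
    constructor
    · rintro ⟨p, ⟨hp1, hpv⟩, b, ⟨hlen, hent, hsorted, hdiag⟩, rfl⟩
      refine ⟨by simp [hlen], ?_, ?_, belowDiagonal_append_singleton.2 ⟨hdiag, by omega⟩⟩
      · simp only [List.mem_append, List.mem_singleton]
        rintro x (hx | rfl)
        · exact ⟨(hent x hx).1, by have := (hent x hx).2; omega⟩
        · omega
      · exact List.pairwise_append.2
          ⟨hsorted, List.pairwise_singleton _ _, fun x hx y hy => by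
            rw [List.mem_singleton.1 hy]; exact (hent x hx).2⟩
    · rintro ⟨hlen, hent, hsorted, hdiag⟩
      obtain ⟨b, p, rfl⟩ :=
        (List.eq_nil_or_concat' a).resolve_left (by rintro rfl; simp at hlen)
      have hblen : b.length = i := by simpa using hlen
      obtain ⟨hbdiag, hp⟩ := belowDiagonal_append_singleton.1 hdiag
      obtain ⟨hbsorted, -, hbp⟩ := List.pairwise_append.1 hsorted
      have hpent := hent p (by simp)
      refine ⟨p, ⟨hpent.1, by omega⟩, b, ⟨hblen, fun x hx => ?_, hbsorted, hbdiag⟩, rfl⟩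
      exact ⟨(hent x (by simp [hx])).1, hbp x hx p (by simp)⟩

theorem ballotLists_succ_of_le {k i v : ℕ} (hv : i + 1 + k ≤ v) :
    ballotLists k (i + 1) v = ballotLists k (i + 1) (i + 1 + k) := by
  simp only [ballotLists, min_eq_right hv, min_self]

theorem ballotLists_succ_succ {k i v : ℕ} (hv : v + 1 ≤ i + 1 + k) :
    ballotLists k (i + 1) (v + 1) =
      (ballotLists k i (v + 1)).image (· ++ [v + 1]) ∪ ballotLists k (i + 1) v := by
  simp only [ballotLists, min_eq_left hv, min_eq_left (show v ≤ i + 1 + k by omega)]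
  rw [← insert_Icc_right_eq_Icc_add_one (by omega), biUnion_insert]

theorem card_ballotLists_succ_succ {k i v : ℕ} (hv : v + 1 ≤ i + 1 + k) :
    #(ballotLists k (i + 1) (v + 1)) = #(ballotLists k (i + 1) v) + #(ballotLists k i (v + 1)) := by
  have hdisj :
      Disjoint ((ballotLists k i (v + 1)).image (· ++ [v + 1])) (ballotLists k (i + 1) v) := by
    refine disjoint_left.2 fun a ha ha' => ?_
    obtain ⟨b, -, rfl⟩ := mem_image.1 ha
    have := ((mem_ballotLists.1 ha').2.1 (v + 1) (by simp)).2
    omega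
  rw [ballotLists_succ_succ hv, card_union_of_disjoint hdisj,
    card_image_of_injective _ (List.append_left_injective _), add_comm]

theorem card_ballotLists_add_choose (k : ℕ) :
    ∀ i v, v ≤ i + k + 1 →
      #(ballotLists k i v) + (i + v - 1).choose (i + k + 1) = (i + v - 1).choose i
  | 0, v, hv => by
    simp [ballotLists, Nat.choose_eq_zero_of_lt (show v - 1 < k + 1 by omega)]
  | i + 1, 0, _ => by
    simp [ballotLists, Nat.choose_eq_zero_of_lt (show i < i + 1 + k + 1 by omega)]
  | i + 1, v + 1, hv => by
    have ih := card_ballotLists_add_choose k (i + 1) v (by omega)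
    have pascal_top := Nat.choose_succ_succ' (i + v) (i + k + 1)
    have pascal_bot := Nat.choose_succ_succ' (i + v) i
    simp only [show i + 1 + v - 1 = i + v by omega, show i + 1 + k + 1 = i + k + 1 + 1 by omega]
      at ih
    rw [show i + 1 + (v + 1) - 1 = i + v + 1 by omega, show i + 1 + k + 1 = i + k + 1 + 1 by omega]
    rcases Nat.lt_or_ge v (i + k + 1) with hlt | hge
    · have ih' := card_ballotLists_add_choose k i (v + 1) (by omega)
      rw [show i + (v + 1) - 1 = i + v by omega] at ih'
      rw [card_ballotLists_succ_succ (by omega)]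
      omega
    · obtain rfl : v = i + k + 1 := by omega
      -- the cap `min v (i + 1 + k)` is reached, and `i + v = i + (i + k + 1)` makes the two
      -- new Pascal terms equal
      have hsymm : (i + (i + k + 1)).choose (i + k + 1) = (i + (i + k + 1)).choose i :=
        Nat.choose_symm_add.symm
      rw [ballotLists_succ_of_le (by omega), ← ballotLists_succ_of_le (v := i + k + 1) (by omega)]
      omega

theorem coe_ballotLists (n k : ℕ) :
    (ballotLists k n n : Set (List ℕ)) = {a | IsOrderedPrefSet n a ∧ flaws n a ≤ k} := by
  ext a
  simp only [mem_coe, mem_ballotLists, Set.mem_ofPred_eq]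
  constructor
  · rintro ⟨hlen, hent, hsorted, hdiag⟩
    have ha : IsOrderedPrefSet n a := ⟨⟨hlen, hent⟩, hsorted⟩
    exact ⟨ha, (flaws_le_iff_belowDiagonal ha k).2 hdiag⟩
  · rintro ⟨ha, hk⟩
    exact ⟨ha.1.1, ha.1.2, ha.2, (flaws_le_iff_belowDiagonal ha k).1 hk⟩

theorem opLe_add_choose (n k : ℕ) :
    opLe n k + (2 * n - 1).choose (n + (k + 1)) = (2 * n - 1).choose n := by
  rw [opLe, ← coe_ballotLists, Set.ncard_coe_finset, two_mul, ← add_assoc]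
  exact card_ballotLists_add_choose k n n (by omega)

theorem opEq_zero (n : ℕ) : opEq n 0 = opLe n 0 := by
  simp only [opEq, opLe, Nat.le_zero]

theorem opEq_succ_add_opLe (n k : ℕ) : opEq n (k + 1) + opLe n k = opLe n (k + 1) := by
  have hfin : {a | IsOrderedPrefSet n a ∧ flaws n a ≤ k + 1}.Finite :=
    coe_ballotLists n (k + 1) ▸ (ballotLists (k + 1) n n).finite_toSet
  have hdisj : Disjoint {a | IsOrderedPrefSet n a ∧ flaws n a = k + 1}
      {a | IsOrderedPrefSet n a ∧ flaws n a ≤ k} :=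
    Set.disjoint_left.2 fun a ha ha' => by simp only [Set.mem_ofPred_eq] at ha ha'; omega
  rw [opEq, opLe, opLe, ← Set.ncard_union_eq hdisj (hfin.subset fun a ha => ⟨ha.1, ha.2.le⟩)
    (hfin.subset fun a ha => ⟨ha.1, ha.2.trans k.le_succ⟩)]
  congr 1
  ext a
  simp only [Set.mem_union, Set.mem_ofPred_eq, ← and_or_left]
  exact and_congr_right fun _ => by omega

theorem cast_opEq (n k : ℕ) :
    (opEq n k : ℚ) = (2 * n - 1).choose (n + k) - (2 * n - 1).choose (n + (k + 1)) := by
  have hle (j : ℕ) : (opLe n j : ℚ) = (2 * n - 1).choose n - (2 * n - 1).choose (n + (j + 1)) :=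
    eq_sub_of_add_eq (by exact_mod_cast opLe_add_choose n j)
  cases k with
  | zero => rw [opEq_zero, hle]; rfl
  | succ k =>
    have h : (opEq n (k + 1) : ℚ) + opLe n k = opLe n (k + 1) := by
      exact_mod_cast opEq_succ_add_opLe n k
    rw [eq_sub_of_add_eq h, hle, hle]
    ring

section Telescoping

variable {R : Type*} [CommRing R]

theorem sum_range_succ_eq_sub_of_eq_zero {M : Type*} [AddCommGroup M] (f : ℕ → M) {n : ℕ}
    (hf : f n = 0) : ∑ k ∈ range n, f (k + 1) = ∑ k ∈ range n, f k - f 0 := by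
  rw [eq_sub_iff_add_eq, ← sum_range_succ', sum_range_succ, hf, add_zero]

theorem sum_range_mul_sub_succ (g : ℕ → R) (n : ℕ) :
    ∑ k ∈ range n, (k : R) * (g k - g (k + 1)) = ∑ k ∈ range n, g (k + 1) - n * g n := by
  induction n with
  | zero => simp
  | succ n ih => rw [sum_range_succ, sum_range_succ, ih]; push_cast; ring

theorem sum_range_mul_sub_one_mul_sub_succ (g : ℕ → R) (n : ℕ) :
    ∑ k ∈ range n, (k : R) * (k - 1) * (g k - g (k + 1)) =
      2 * ∑ k ∈ range n, k * g (k + 1) - n * (n - 1) * g n := by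
  induction n with
  | zero => simp
  | succ n ih => rw [sum_range_succ, sum_range_succ, ih]; push_cast; ring

end Telescoping

theorem sum_range_choose_upper_half (m : ℕ) :
    ∑ k ∈ range (m + 1), (2 * m + 1).choose (m + 1 + k) = 4 ^ m := by
  rw [← Nat.sum_range_choose_halfway m, ← sum_range_reflect]
  refine sum_congr rfl fun k hk => ?_
  rw [mem_range] at hk
  rw [← Nat.choose_symm (by omega)]
  congr 1
  omega

-- `j C(N, j) = N C(N-1, j-1)` and `(N - j) C(N, j) = N C(N-1, j)` with `N = 2m+1`, `j = m+1+k`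
theorem two_mul_add_one_mul_choose (m : ℕ) {k : ℕ} (hk : k ≤ m) :
    (2 * k + 1 : ℚ) * (2 * m + 1).choose (m + 1 + k) =
      (2 * m + 1) * ((2 * m).choose (m + k) - (2 * m).choose (m + (k + 1))) := by
  have hlow : ((m + k + 1 : ℕ) : ℚ) * (2 * m + 1).choose (m + 1 + k) =
      (2 * m + 1) * (2 * m).choose (m + k) := by
    rw [show m + 1 + k = m + k + 1 by omega, mul_comm]
    exact_mod_cast (Nat.add_one_mul_choose_eq (2 * m) (m + k)).symm
  have hhigh : ((m - k : ℕ) : ℚ) * (2 * m + 1).choose (m + 1 + k) =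
      (2 * m + 1) * (2 * m).choose (m + (k + 1)) := by
    have := Nat.choose_mul_succ_eq (2 * m) (m + (k + 1))
    rw [show 2 * m + 1 - (m + (k + 1)) = m - k by omega,
      show m + (k + 1) = m + 1 + k by omega] at this
    rw [show m + (k + 1) = m + 1 + k by omega, mul_comm, mul_comm (2 * m + 1 : ℚ)]
    exact_mod_cast this.symm
  rw [Nat.cast_sub hk] at hhigh
  push_cast at hlow
  linear_combination hlow - hhigh

theorem sum_range_two_mul_add_one_mul_choose (m : ℕ) :
    ∑ k ∈ range (m + 1), (2 * k + 1 : ℚ) * (2 * m + 1).choose (m + 1 + k) =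
      (2 * m + 1) * (2 * m).choose m := by
  rw [sum_congr rfl fun k hk => two_mul_add_one_mul_choose m (Nat.lt_succ_iff.1 (mem_range.1 hk)),
    ← mul_sum, sum_range_sub' (fun k => ((2 * m).choose (m + k) : ℚ)),
    Nat.choose_eq_zero_of_lt (by omega : 2 * m < m + (m + 1))]
  simp

theorem choose_two_mul_add_two (m : ℕ) :
    (2 * (m + 1)).choose (m + 1) = 2 * (2 * m + 1).choose (m + 1) := by
  rw [show 2 * (m + 1) = 2 * m + 1 + 1 by omega, Nat.choose_succ_succ',
    Nat.choose_symm_half m]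
  exact (two_mul _).symm

theorem cast_opEq_succ (m k : ℕ) :
    (opEq (m + 1) k : ℚ) =
      (2 * m + 1).choose (m + 1 + k) - (2 * m + 1).choose (m + 1 + (k + 1)) := by
  rw [cast_opEq, show 2 * (m + 1) - 1 = 2 * m + 1 by omega]

theorem choose_top_eq_zero (m : ℕ) : (2 * m + 1).choose (m + 1 + (m + 1)) = 0 :=
  Nat.choose_eq_zero_of_lt (by omega)

theorem sum_opEq {n : ℕ} (hn : 1 ≤ n) :
    ∑ k ∈ range n, (opEq n k : ℚ) = (2 * n).choose n / 2 := by
  obtain ⟨m, rfl⟩ := Nat.exists_eq_add_of_le' hn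
  simp only [cast_opEq_succ]
  rw [sum_range_sub' (fun k => ((2 * m + 1).choose (m + 1 + k) : ℚ)), choose_top_eq_zero,
    choose_two_mul_add_two]
  push_cast
  ring

theorem sum_mul_opEq {n : ℕ} (hn : 1 ≤ n) :
    ∑ k ∈ range n, (k : ℚ) * opEq n k = (2 ^ (2 * n - 1) - (2 * n).choose n) / 2 := by
  obtain ⟨m, rfl⟩ := Nat.exists_eq_add_of_le' hn
  set g : ℕ → ℚ := fun k => (2 * m + 1).choose (m + 1 + k)
  have hg : g (m + 1) = 0 := by simp [g, choose_top_eq_zero]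
  have hsum : ∑ k ∈ range (m + 1), g k = 4 ^ m := by
    simp only [g]; exact_mod_cast sum_range_choose_upper_half m
  simp only [cast_opEq_succ]
  rw [sum_range_mul_sub_succ g, sum_range_succ_eq_sub_of_eq_zero g hg, hg, hsum,
    choose_two_mul_add_two, show 2 * (m + 1) - 1 = 2 * m + 1 by omega, pow_succ, pow_mul]
  push_cast
  ring

theorem sum_mul_sub_one_mul_opEq {n : ℕ} (hn : 1 ≤ n) :
    ∑ k ∈ range n, (k : ℚ) * (k - 1) * opEq n k =
      ((n + 2) * (2 * n).choose n - 3 * 2 ^ (2 * n - 1)) / 2 := by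
  obtain ⟨m, rfl⟩ := Nat.exists_eq_add_of_le' hn
  set g : ℕ → ℚ := fun k => (2 * m + 1).choose (m + 1 + k)
  have hg : g (m + 1) = 0 := by simp [g, choose_top_eq_zero]
  have hsum : ∑ k ∈ range (m + 1), g k = 4 ^ m := by
    simp only [g]; exact_mod_cast sum_range_choose_upper_half m
  have hodd : ∑ k ∈ range (m + 1), (2 * k + 1 : ℚ) * g k = (2 * m + 1) * (2 * m).choose m :=
    sum_range_two_mul_add_one_mul_choose m
  have hcentral : ((m + 1 : ℕ) : ℚ) * (2 * (m + 1)).choose (m + 1) =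
      2 * (2 * m + 1) * (2 * m).choose m := by
    exact_mod_cast Nat.succ_mul_centralBinom_succ m
  have hshift : ∑ k ∈ range (m + 1), (k : ℚ) * g (k + 1) =
      ∑ k ∈ range (m + 1), (k : ℚ) * g k - (4 ^ m - g 0) := by
    have h := sum_range_succ_eq_sub_of_eq_zero (fun k => (k : ℚ) * g k) (n := m + 1)
      (by simp [hg])
    simp only [Nat.cast_add, Nat.cast_one, add_mul, one_mul, sum_add_distrib, Nat.cast_zero,
      zero_mul, sub_zero] at h
    rw [sum_range_succ_eq_sub_of_eq_zero g hg, hsum] at h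
    linear_combination h
  simp only [cast_opEq_succ]
  rw [sum_range_mul_sub_one_mul_sub_succ g, hg, hshift, choose_two_mul_add_two,
    show 2 * (m + 1) - 1 = 2 * m + 1 by omega, pow_succ, pow_mul]
  rw [choose_two_mul_add_two] at hcentral
  simp only [add_mul, one_mul, sum_add_distrib, ← mul_sum, mul_assoc] at hodd
  push_cast at hcentral ⊢
  linear_combination hodd - hsum - hcentral / 2

theorem stmt19 (n : ℕ) (hn : 1 ≤ n) :
    ((∑ k ∈ Finset.range n, (k : ℚ) * (opEq n k : ℚ)) /
        (∑ k ∈ Finset.range n, (opEq n k : ℚ))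
      = 2 ^ (2 * n - 1) / ((2 * n).choose n : ℚ) - 1) ∧
    ((∑ k ∈ Finset.range n, (k : ℚ) ^ 2 * (opEq n k : ℚ)) /
        (∑ k ∈ Finset.range n, (opEq n k : ℚ))
      - ((∑ k ∈ Finset.range n, (k : ℚ) * (opEq n k : ℚ)) /
          (∑ k ∈ Finset.range n, (opEq n k : ℚ))) ^ 2
      = (n : ℚ) - (2 ^ (2 * n - 1) / ((2 * n).choose n : ℚ)) ^ 2) ∧
    (2 * ∑ k ∈ Finset.range n, opEq n k = (2 * n).choose n) ∧
    (2 * ∑ k ∈ Finset.range n, k * opEq n k = 2 ^ (2 * n - 1) - (2 * n).choose n) ∧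
    (2 * ∑ k ∈ Finset.range n, k * (k - 1) * opEq n k
      = (n + 2) * (2 * n).choose n - 3 * 2 ^ (2 * n - 1)) := by
  have hC : ((2 * n).choose n : ℚ) ≠ 0 := by
    exact_mod_cast (Nat.choose_pos (by omega : n ≤ 2 * n)).ne'
  have hsq : ∑ k ∈ range n, (k : ℚ) ^ 2 * opEq n k =
      ∑ k ∈ range n, (k : ℚ) * (k - 1) * opEq n k +
        ∑ k ∈ range n, (k : ℚ) * opEq n k := by
    rw [← sum_add_distrib]; exact sum_congr rfl fun k _ => by ring
  have hfact (k : ℕ) : (k : ℚ) * ((k - 1 : ℕ) : ℚ) = k * (k - 1) := by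
    rcases k with _ | k <;> simp
  have h0 := sum_opEq hn
  have h1 := sum_mul_opEq hn
  have h2 := sum_mul_sub_one_mul_opEq hn
  refine ⟨?_, ?_, ?_, eq_tsub_of_add_eq ?_, eq_tsub_of_add_eq ?_⟩
  · rw [h1, h0]; field_simp
  · rw [hsq, h2, h1, h0]; field_simp; ring
  · have : ((2 * ∑ k ∈ range n, opEq n k : ℕ) : ℚ) = ((2 * n).choose n : ℕ) := by
      push_cast; rw [h0]; ring
    exact_mod_cast this
  · have : ((2 * ∑ k ∈ range n, k * opEq n k + (2 * n).choose n : ℕ) : ℚ) =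
        ((2 ^ (2 * n - 1) : ℕ) : ℚ) := by
      push_cast; rw [h1]; ring
    exact_mod_cast this
  · have : ((2 * ∑ k ∈ range n, k * (k - 1) * opEq n k + 3 * 2 ^ (2 * n - 1) : ℕ) : ℚ) =
        (((n + 2) * (2 * n).choose n : ℕ) : ℚ) := by
      push_cast; simp only [hfact]; rw [h2]; ring
    exact_mod_cast this
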